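/- Suppose u : ℝᵈ × [0,1] × [0,1] → ℝᵈ satisfies u(x_t, t, r) = v(x_t, t) + (r − t)(d/dt)u(x_t, t, r) along trajectories of dx/dt = v(x,t) (the MeanFlow identity), and define X(x, t, r) = x + (r − t) u(x, t, r). Then X satisfies the Transition Flow Identity X(x_t, t, r) = x_{t→r} + (r − t)(d/dt)X(x_t, t, r) along the same trajectories, where x_{t→r} = x_t + ∫ₜʳ v(x_τ, τ)dτ. Conversely, if X satisfies the Transition Flow Identity and u is defined by u(x,t,r) = (X(x,t,r) − x)/(r−t) for t < r, then u satisfies the MeanFlow identity. -/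

import Mathlib

open Set intervalIntegral

/-- Unified perspective between MeanFlow and Transition Flow Matching: along a C¹
trajectory of `dx/dt = v(x t, t)` with `r` fixed, where `u(x_t,t,r)` is the average
velocity (`(r-t) • u(x_t,t,r) = ∫ₜʳ v(x τ, τ) dτ`) and `X(x,t,r) = x + (r-t) • u(x,t,r)`
(equivalently `u(x,t,r) = (X(x,t,r) - x)/(r-t)` for `t < r`), the MeanFlow identity
`u(x_t,t,r) = v(x_t,t) + (r-t) • (d/dt) u(x_t,t,r)` holds iff the Transition Flow
Identity `X(x_t,t,r) = x_{t→r} + (r-t) • (d/dt) X(x_t,t,r)` holds, where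
`x_{t→r} = x_t + ∫ₜʳ v(x_τ,τ) dτ`. -/
theorem meanflow_iff_transition_flow {d : ℕ}
    (v : EuclideanSpace ℝ (Fin d) → ℝ → EuclideanSpace ℝ (Fin d))
    (u X : EuclideanSpace ℝ (Fin d) → ℝ → ℝ → EuclideanSpace ℝ (Fin d))
    (x : ℝ → EuclideanSpace ℝ (Fin d)) (r : ℝ) (hr0 : 0 < r) (hr1 : r ≤ 1)
    (hx : ∀ t ∈ Ico (0:ℝ) r, HasDerivAt x (v (x t) t) t)
    (hint : IntervalIntegrable (fun τ => v (x τ) τ) MeasureTheory.volume 0 r)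
    -- u is the average velocity along the trajectory
    (hu_avg : ∀ t ∈ Ico (0:ℝ) r, (r - t) • u (x t) t r = ∫ τ in t..r, v (x τ) τ)
    -- correspondence X = x + (r - t) • u
    (hXu : ∀ (y : EuclideanSpace ℝ (Fin d)) (t : ℝ), X y t r = y + (r - t) • u y t r)
    (hu_diff : ∀ t ∈ Ico (0:ℝ) r, DifferentiableAt ℝ (fun s => u (x s) s r) t)
    (hX_diff : ∀ t ∈ Ico (0:ℝ) r, DifferentiableAt ℝ (fun s => X (x s) s r) t) :
    (∀ t ∈ Ico (0:ℝ) r,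
        u (x t) t r = v (x t) t + (r - t) • deriv (fun s => u (x s) s r) t) ↔
    (∀ t ∈ Ico (0:ℝ) r,
        X (x t) t r = (x t + ∫ τ in t..r, v (x τ) τ) +
          (r - t) • deriv (fun s => X (x s) s r) t) := by
  have key : ∀ t ∈ Ico (0:ℝ) r,
      deriv (fun s => X (x s) s r) t
        = v (x t) t + ((-1:ℝ) • u (x t) t r + (r - t) • deriv (fun s => u (x s) s r) t) := by
    intro t ht
    have hxd := hx t ht
    have hud := (hu_diff t ht).hasDerivAt
    have hc : HasDerivAt (fun s : ℝ => r - s) (-1 : ℝ) t := by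
      simpa using (hasDerivAt_id t).const_sub r
    have h1 := hc.smul hud
    have h2 : HasDerivAt (fun s => X (x s) s r)
        (v (x t) t + ((-1:ℝ) • u (x t) t r +
          (r - t) • deriv (fun s => u (x s) s r) t)) t := by
      have heq : (fun s => X (x s) s r) = fun s => x s + (r - s) • u (x s) s r := by
        funext s; exact hXu (x s) s
      rw [heq]
      have := hxd.add h1
      refine HasDerivAt.congr_deriv (f := fun s => x s + (r - s) • u (x s) s r) this ?_
      module
    exact h2.deriv
  constructor
  · intro h t ht
    have hk := key t ht
    have havg := hu_avg t ht
    have hmf := h t ht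
    rw [hXu (x t) t, ← havg, hk, hmf]
    module
  · intro h t ht
    have hk := key t ht
    have havg := hu_avg t ht
    have htf := h t ht
    rw [hXu (x t) t, ← havg, hk] at htf
    set U := u (x t) t r
    set V := v (x t) t
    set U' := deriv (fun s => u (x s) s r) t
    have h0 : (r - t) • (V + ((-1:ℝ) • U + (r - t) • U')) = 0 :=
      left_eq_add.mp htf
    have hrt : (r - t) ≠ 0 := sub_ne_zero.mpr (ne_of_gt ht.2)
    have h1 : V + ((-1:ℝ) • U + (r - t) • U') = 0 :=
      (smul_eq_zero.mp h0).resolve_left hrt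
    have h2 : U - (V + (r - t) • U') = -(V + ((-1:ℝ) • U + (r - t) • U')) := by
      module
    rw [h1, neg_zero] at h2
    exact sub_eq_zero.mp h2
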